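/- With σ, σ₁,...,σ_{n-1} as above and σ² = τ·ω^d(τ) for τ ∈ S_d of order q, the squares σ_s² = ω^{(s-1)d}(τ)·ω^{sd}(τ) lie in the abelian group ⟨τ⟩^{(n)} = ⟨τ⟩ × ω^d⟨τ⟩ × ... × ω^{(n-1)d}⟨τ⟩, and the conjugation identities c_{σ_{r+1}}(σ_r²) = c_{σ_r}(σ_{r+1}²) = ω^{(r-1)d}(τ)·ω^{(r+1)d}(τ) hold for r = 1,...,n-2. -/

import Mathlib

/-- The shift of a permutation of `ℕ` up by `d`: fixes `{0,…,d-1}` and acts as `σ`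
conjugated by `k ↦ k + d` above. -/
def shift (d : ℕ) (σ : Equiv.Perm ℕ) : Equiv.Perm ℕ where
  toFun k := if k < d then k else σ (k - d) + d
  invFun k := if k < d then k else σ⁻¹ (k - d) + d
  left_inv k := by
    by_cases h : k < d
    · simp [h]
    · dsimp only
      rw [if_neg h, if_neg (by omega), Nat.add_sub_cancel, Equiv.Perm.coe_inv, Equiv.symm_apply_apply]
      omega
  right_inv k := by
    by_cases h : k < d
    · simp [h]
    · dsimp only
      rw [if_neg h, if_neg (by omega), Nat.add_sub_cancel, Equiv.Perm.coe_inv, Equiv.apply_symm_apply]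
      omega

/-- The involution of `ℕ` swapping the blocks `{0,…,d-1}` and `{d,…,2d-1}`. -/
def theta (d : ℕ) : Equiv.Perm ℕ :=
  Function.Involutive.toPerm
    (fun k => if k < d then k + d else if k < 2 * d then k - d else k)
    (by intro k; dsimp only; split_ifs <;> omega)

/-!
The involution `θ` exchanges the blocks `[0, d)` and `[d, 2d)`, so it conjugates every
`x ∈ S_d` to `ω^d(x)`, and `σ = θ·ς₁·θς₂θ`. Permutations supported on disjoint blocks commute,
so the three identities `σ² = τ·ω^d(τ)`, `c_σ(τ) = ω^d(τ)` and `c_σ(ω^d(τ)) = τ` reduce to a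
computation in an arbitrary group with an involution `θ`. Since moreover `ω^d(σ)` commutes with
`τ` and `σ` with `ω^{2d}(τ)`, both conjugates equal `τ·ω^{2d}(τ)` for `r = 1`; the general case
is its image under the homomorphism `ω^{(r-1)d}`, using `ω^a ∘ ω^b = ω^{a+b}`.
-/

section Involution

variable {G : Type*} [Group G] {θ a b τ : G}

lemma mul_mul_cancel_of_mul_self (hθ : θ * θ = 1) (x : G) : θ * (θ * x) = x := by
  rw [← mul_assoc, hθ, one_mul]

lemma conj_involution_mul (hθ : θ * θ = 1) (x y : G) :
    θ * (x * y) * θ = θ * x * θ * (θ * y * θ) := by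
  simp only [mul_assoc, mul_mul_cancel_of_mul_self hθ]

lemma mul_conj_sq (hθ : θ * θ = 1) (hτ : a * b = τ) (hτ' : b * a = τ)
    (hA : Commute (θ * a * θ) τ) :
    θ * a * (θ * b * θ) * (θ * a * (θ * b * θ)) = τ * (θ * τ * θ) := by
  calc θ * a * (θ * b * θ) * (θ * a * (θ * b * θ))
      = θ * a * θ * (b * a) * (θ * b * θ) := by simp only [mul_assoc, mul_mul_cancel_of_mul_self hθ]
    _ = τ * (θ * a * θ * (θ * b * θ)) := by rw [hτ', hA.eq, mul_assoc, mul_assoc]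
    _ = τ * (θ * τ * θ) := by rw [← conj_involution_mul hθ, hτ]

lemma conj_mul_of_commute {g c x : G} (h : Commute c x) :
    g * c * x * (g * c)⁻¹ = g * x * g⁻¹ := by
  rw [mul_assoc g c x, h.eq]; group

lemma conj_conj_of_commute (hθ : θ * θ = 1) {x y : G} (h : Commute x y) :
    Commute (θ * x * θ) (θ * y * θ) := by
  rw [Commute, SemiconjBy, ← conj_involution_mul hθ, ← conj_involution_mul hθ, h.eq]

lemma mul_conj_conj_self (hθ : θ * θ = 1) (hτ : a * b = τ) (hτ' : b * a = τ)
    (hB : Commute (θ * b * θ) τ) :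
    θ * a * (θ * b * θ) * τ * (θ * a * (θ * b * θ))⁻¹ = θ * τ * θ := by
  have ha : Commute a τ := hτ ▸ (Commute.refl a).mul_right (hτ.trans hτ'.symm)
  rw [mul_assoc θ a, conj_mul_of_commute (ha.mul_left hB), inv_eq_of_mul_eq_one_left hθ]

lemma mul_conj_conj_conj (hθ : θ * θ = 1) (hτ : a * b = τ) (hτ' : b * a = τ)
    (ha : Commute a (θ * τ * θ)) :
    θ * a * (θ * b * θ) * (θ * τ * θ) * (θ * a * (θ * b * θ))⁻¹ = τ := by
  have hb : Commute b τ := hτ' ▸ (Commute.refl b).mul_right (hτ'.trans hτ.symm)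
  rw [mul_assoc θ a, conj_mul_of_commute (ha.mul_left (conj_conj_of_commute hθ hb)),
    inv_eq_of_mul_eq_one_left hθ]
  simp only [mul_assoc, mul_mul_cancel_of_mul_self hθ, hθ, mul_one]

end Involution

open Equiv

section Shift

variable {m : ℕ} {x : Perm ℕ} {k : ℕ}

lemma shift_apply (m : ℕ) (x : Perm ℕ) (k : ℕ) :
    shift m x k = if k < m then k else x (k - m) + m := rfl

lemma shift_apply_of_lt (x : Perm ℕ) (hk : k < m) : shift m x k = k := if_pos hk

lemma shift_apply_of_le (x : Perm ℕ) (hk : m ≤ k) : shift m x k = x (k - m) + m :=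
  if_neg (Nat.not_lt.2 hk)

lemma shift_mul (m : ℕ) (x y : Perm ℕ) : shift m (x * y) = shift m x * shift m y := by
  ext k
  rcases lt_or_ge k m with hk | hk
  · simp only [Perm.mul_apply, shift_apply_of_lt _ hk]
  · simp only [Perm.mul_apply, shift_apply_of_le _ hk, shift_apply_of_le _ (Nat.le_add_left m _),
      Nat.add_sub_cancel]

lemma shift_inv (m : ℕ) (x : Perm ℕ) : shift m x⁻¹ = (shift m x)⁻¹ :=
  map_inv (MonoidHom.mk' (shift m) (shift_mul m)) x

lemma shift_conj (m : ℕ) (x y : Perm ℕ) :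
    shift m (x * y * x⁻¹) = shift m x * shift m y * (shift m x)⁻¹ := by
  rw [shift_mul, shift_mul, shift_inv]

lemma shift_shift (a b : ℕ) (x : Perm ℕ) : shift a (shift b x) = shift (a + b) x := by
  ext k
  simp only [shift_apply]
  split_ifs <;> first | omega | (congr 2; omega) | (rw [Nat.sub_sub]; omega)

lemma shift_apply_eq_self {D : ℕ} (hx : ∀ k, D ≤ k → x k = k) (hk : m + D ≤ k) :
    shift m x k = k := by
  rw [shift_apply_of_le x (by omega), hx _ (by omega)]
  omega

lemma disjoint_shift (hx : ∀ k, m ≤ k → x k = k) (y : Perm ℕ) : x.Disjoint (shift m y) :=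
  fun k => (lt_or_ge k m).elim (fun hk => .inr (shift_apply_of_lt y hk)) (fun hk => .inl (hx k hk))

lemma apply_lt_of_forall_le (hx : ∀ k, m ≤ k → x k = k) (hk : k < m) : x k < m := by
  by_contra! h
  have := x.injective (hx _ h)
  omega

lemma commute_shift (hx : ∀ k, m ≤ k → x k = k) (y : Perm ℕ) : Commute x (shift m y) :=
  (disjoint_shift hx y).commute

end Shift

section Theta

variable {d : ℕ} {x : Perm ℕ}

lemma theta_apply (d k : ℕ) :
    theta d k = if k < d then k + d else if k < 2 * d then k - d else k := rfl

lemma theta_mul_self (d : ℕ) : theta d * theta d = 1 := by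
  ext k
  simp only [Perm.mul_apply, Perm.one_apply, theta_apply]
  split_ifs <;> omega

lemma theta_mul_mul_theta (hx : ∀ k, d ≤ k → x k = k) : theta d * x * theta d = shift d x := by
  ext k
  simp only [Perm.mul_apply, shift_apply, theta_apply]
  rcases lt_or_ge k d with h | h
  · rw [if_pos h, hx _ (by omega)]
    split_ifs <;> omega
  · rcases lt_or_ge k (2 * d) with h' | h'
    · have := apply_lt_of_forall_le hx (show k - d < d by omega)
      simp only [if_neg (Nat.not_lt.2 h), if_pos h', if_pos this]
    · simp only [if_neg (Nat.not_lt.2 h), if_neg (Nat.not_lt.2 h'), hx _ h, hx (k - d) (by omega)]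
      omega

end Theta

def sigma (d : ℕ) (ς₁ ς₂ : Perm ℕ) : Perm ℕ := theta d * ς₁ * shift d ς₂

lemma sigma_apply_of_le {d : ℕ} {ς₁ ς₂ : Perm ℕ} (h₁ : ∀ k, d ≤ k → ς₁ k = k)
    (h₂ : ∀ k, d ≤ k → ς₂ k = k) {k : ℕ} (hk : 2 * d ≤ k) : sigma d ς₁ ς₂ k = k := by
  rw [sigma, Perm.mul_apply, Perm.mul_apply, shift_apply_eq_self h₂ (by omega), h₁ k (by omega),
    theta_apply, if_neg (by omega), if_neg (by omega)]

structure IsCommFactorization (d : ℕ) (ς₁ ς₂ τ : Perm ℕ) : Prop where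
  fixes_left : ∀ k, d ≤ k → ς₁ k = k
  fixes_right : ∀ k, d ≤ k → ς₂ k = k
  mul_eq : ς₁ * ς₂ = τ
  mul_eq' : ς₂ * ς₁ = τ

namespace IsCommFactorization

variable {d : ℕ} {ς₁ ς₂ τ : Perm ℕ}

lemma fixes (h : IsCommFactorization d ς₁ ς₂ τ) : ∀ k, d ≤ k → τ k = k := fun k hk => by
  rw [← h.mul_eq, Perm.mul_apply, h.fixes_right k hk, h.fixes_left k hk]

lemma sigma_eq (h : IsCommFactorization d ς₁ ς₂ τ) :
    sigma d ς₁ ς₂ = theta d * ς₁ * (theta d * ς₂ * theta d) := by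
  rw [sigma, theta_mul_mul_theta h.fixes_right]

lemma sigma_mul_self (h : IsCommFactorization d ς₁ ς₂ τ) :
    sigma d ς₁ ς₂ * sigma d ς₁ ς₂ = τ * shift d τ := by
  rw [h.sigma_eq, ← theta_mul_mul_theta h.fixes]
  refine mul_conj_sq (theta_mul_self d) h.mul_eq h.mul_eq' ?_
  rw [theta_mul_mul_theta h.fixes_left]
  exact (commute_shift h.fixes ς₁).symm

lemma sigma_conj (h : IsCommFactorization d ς₁ ς₂ τ) :
    sigma d ς₁ ς₂ * τ * (sigma d ς₁ ς₂)⁻¹ = shift d τ := by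
  rw [h.sigma_eq, ← theta_mul_mul_theta h.fixes]
  refine mul_conj_conj_self (theta_mul_self d) h.mul_eq h.mul_eq' ?_
  rw [theta_mul_mul_theta h.fixes_right]
  exact (commute_shift h.fixes ς₂).symm

lemma sigma_conj_shift (h : IsCommFactorization d ς₁ ς₂ τ) :
    sigma d ς₁ ς₂ * shift d τ * (sigma d ς₁ ς₂)⁻¹ = τ := by
  rw [h.sigma_eq, ← theta_mul_mul_theta h.fixes]
  refine mul_conj_conj_conj (theta_mul_self d) h.mul_eq h.mul_eq' ?_
  rw [theta_mul_mul_theta h.fixes]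
  exact commute_shift h.fixes_left τ

lemma shift_sigma_conj_sigma_mul_self (h : IsCommFactorization d ς₁ ς₂ τ) :
    shift d (sigma d ς₁ ς₂) * (sigma d ς₁ ς₂ * sigma d ς₁ ς₂) * (shift d (sigma d ς₁ ς₂))⁻¹ =
      τ * shift (2 * d) τ := by
  rw [h.sigma_mul_self, ← conj_mul, (commute_shift h.fixes _).symm.mul_inv_cancel,
    ← shift_conj, h.sigma_conj, shift_shift, two_mul]

lemma sigma_conj_shift_sigma_mul_self (h : IsCommFactorization d ς₁ ς₂ τ) :
    sigma d ς₁ ς₂ * (shift d (sigma d ς₁ ς₂) * shift d (sigma d ς₁ ς₂)) * (sigma d ς₁ ς₂)⁻¹ =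
      τ * shift (2 * d) τ := by
  rw [← shift_mul, h.sigma_mul_self, shift_mul, shift_shift, ← two_mul, ← conj_mul,
    h.sigma_conj_shift,
    (commute_shift (fun _ => sigma_apply_of_le h.fixes_left h.fixes_right) _).mul_inv_cancel]

end IsCommFactorization

theorem stmt_10_general (d n : ℕ) (ς₁ ς₂ τ : Equiv.Perm ℕ)
    (h₁ : ∀ k, d ≤ k → ς₁ k = k) (h₂ : ∀ k, d ≤ k → ς₂ k = k)
    (hτ : ς₁ * ς₂ = τ) (hτ' : ς₂ * ς₁ = τ)
    (σ : Equiv.Perm ℕ) (hσ : σ = theta d * ς₁ * shift d ς₂)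
    (σs : ℕ → Equiv.Perm ℕ) (hσs : ∀ s, σs s = shift ((s - 1) * d) σ)
    (T : Subgroup (Equiv.Perm ℕ))
    (hT : T = Subgroup.closure {x | ∃ k < n, x ∈ Subgroup.zpowers (shift (k * d) τ)}) :
    (∀ s, 1 ≤ s → s ≤ n - 1 →
      σs s * σs s = shift ((s - 1) * d) τ * shift (s * d) τ ∧ σs s * σs s ∈ T) ∧
      (∀ r, 1 ≤ r → r ≤ n - 2 →
        σs (r + 1) * (σs r * σs r) * (σs (r + 1))⁻¹ =
            shift ((r - 1) * d) τ * shift ((r + 1) * d) τ ∧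
          σs r * (σs (r + 1) * σs (r + 1)) * (σs r)⁻¹ =
            shift ((r - 1) * d) τ * shift ((r + 1) * d) τ) := by
  have h : IsCommFactorization d ς₁ ς₂ τ := ⟨h₁, h₂, hτ, hτ'⟩
  obtain rfl : σ = sigma d ς₁ ς₂ := hσ
  set σ := sigma d ς₁ ς₂
  have shift_mem (k : ℕ) (hk : k < n) : shift (k * d) τ ∈ T :=
    hT ▸ Subgroup.subset_closure ⟨k, hk, Subgroup.mem_zpowers _⟩
  have hsq (s : ℕ) (hs : 1 ≤ s) : σs s * σs s = shift ((s - 1) * d) τ * shift (s * d) τ := by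
    rw [hσs, ← shift_mul, h.sigma_mul_self, shift_mul, shift_shift, ← add_one_mul,
      Nat.sub_add_cancel hs]
  refine ⟨fun s hs hsn => ⟨hsq s hs, hsq s hs ▸ mul_mem (shift_mem _ (by omega))
    (shift_mem _ (by omega))⟩, fun r hr _ => ?_⟩
  have hσs_succ : σs (r + 1) = shift ((r - 1) * d) (shift d σ) := by
    rw [hσs, shift_shift, ← add_one_mul, Nat.sub_add_cancel hr, Nat.add_sub_cancel]
  have hshift : (r - 1) * d + 2 * d = (r + 1) * d := by
    rw [← add_mul]; congr 1; omega
  constructor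
  · calc σs (r + 1) * (σs r * σs r) * (σs (r + 1))⁻¹
        = shift ((r - 1) * d) (shift d σ * (σ * σ) * (shift d σ)⁻¹) := by
          rw [shift_conj, shift_mul, hσs_succ, hσs]
      _ = _ := by rw [h.shift_sigma_conj_sigma_mul_self, shift_mul, shift_shift, hshift]
  · calc σs r * (σs (r + 1) * σs (r + 1)) * (σs r)⁻¹
        = shift ((r - 1) * d) (σ * (shift d σ * shift d σ) * σ⁻¹) := by
          rw [shift_conj, shift_mul, hσs_succ, hσs]
      _ = _ := by rw [h.sigma_conj_shift_sigma_mul_self, shift_mul, shift_shift, hshift]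

/-- With `σ = θ·ς₁·ω^d(ς₂)`, `ς₁ς₂ = ς₂ς₁ = τ`, `σ_s = ω^{(s-1)d}(σ)`: the squares
`σ_s² = ω^{(s-1)d}(τ)·ω^{sd}(τ)` belong to the abelian group
`⟨τ⟩^{(n)} = ⟨τ⟩ × ω^d⟨τ⟩ × ⋯ × ω^{(n-1)d}⟨τ⟩`, and
`c_{σ_{r+1}}(σ_r²) = c_{σ_r}(σ_{r+1}²) = ω^{(r-1)d}(τ)·ω^{(r+1)d}(τ)` for
`r = 1,…,n-2`. -/
theorem stmt_10 (d n : ℕ) (hd : 2 ≤ d) (hn : 3 ≤ n) (ς₁ ς₂ τ : Equiv.Perm ℕ)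
    (h₁ : ∀ k, d ≤ k → ς₁ k = k) (h₂ : ∀ k, d ≤ k → ς₂ k = k)
    (hτ : ς₁ * ς₂ = τ) (hτ' : ς₂ * ς₁ = τ)
    (σ : Equiv.Perm ℕ) (hσ : σ = theta d * ς₁ * shift d ς₂)
    (σs : ℕ → Equiv.Perm ℕ) (hσs : ∀ s, σs s = shift ((s - 1) * d) σ)
    (T : Subgroup (Equiv.Perm ℕ))
    (hT : T = Subgroup.closure {x | ∃ k < n, x ∈ Subgroup.zpowers (shift (k * d) τ)}) :
    (∀ s, 1 ≤ s → s ≤ n - 1 →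
      σs s * σs s = shift ((s - 1) * d) τ * shift (s * d) τ ∧ σs s * σs s ∈ T) ∧
      (∀ r, 1 ≤ r → r ≤ n - 2 →
        σs (r + 1) * (σs r * σs r) * (σs (r + 1))⁻¹ =
            shift ((r - 1) * d) τ * shift ((r + 1) * d) τ ∧
          σs r * (σs (r + 1) * σs (r + 1)) * (σs r)⁻¹ =
            shift ((r - 1) * d) τ * shift ((r + 1) * d) τ) :=
  stmt_10_general d n ς₁ ς₂ τ h₁ h₂ hτ hτ' σ hσ σs hσs T hT
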